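/- Suboptimality bound for the H₂ surrogate: Let F*, F̃ be invertible m×m matrices (m = nN) with |det F*| = |det F̃| = c > 0 and σ_max(F̃) ≤ σ_max(F*). Define H₂(F) = Σ_{i=1}^{m} σ_i(F⁻¹)², and let σ̃ = (σ₂(F̃)²/σ_m(F̃)², ..., σ₂(F̃)²/σ₂(F̃)²) and σ* = (σ_m(F*)²/σ_m(F*)², ..., σ_m(F*)²/σ₂(F*)²) (vectors of length m−1). Then H₂(F̃)/H₂(F*) ≤ (m/(m−1)) · exp((Var(σ̃) − Var(σ*))/2). -/

import Mathlib

/-- Singular values of a square real matrix (unordered):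
square roots of the eigenvalues of `Mᵀ * M`. -/
noncomputable def svals {m : ℕ} (M : Matrix (Fin m) (Fin m) ℝ) : Fin m → ℝ :=
  fun i => Real.sqrt (((by simpa only [Matrix.conjTranspose_eq_transpose_of_trivial] using Matrix.isHermitian_conjTranspose_mul_self M : (Matrix.transpose M * M).IsHermitian)).eigenvalues i)

/-- Singular values arranged in decreasing order: `svDesc M 0` is the largest. -/
noncomputable def svDesc {m : ℕ} (M : Matrix (Fin m) (Fin m) ℝ) : Fin m → ℝ :=
  fun i => svals M (Tuple.sort (svals M) i.rev)
/-- Empirical variance of a vector. -/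
noncomputable def empVar {k : ℕ} (z : Fin k → ℝ) : ℝ :=
  (∑ i, (z i - (∑ j, z j) / k) ^ 2) / k

/-!
Write `d₁ ≥ ⋯ ≥ dₘ > 0` for the singular values of `F`; those of `F⁻¹` are the `dᵢ⁻¹`, so
`H₂(F) = ∑ dᵢ⁻²`. The head term `d₁⁻²` is the smallest, so `T ≤ H₂(F) ≤ m/(m-1) · T` for the
tail `T = ∑_{i ≥ 2} dᵢ⁻²`.

Jensen's inequality for `x ↦ x²/2 + log x`, convex on `[1, ∞)` and concave on `(0, 1]`, quantifies
AM-GM: `log AM - log GM ≤ Var/2` for data `≥ 1` and `≥ Var/2` for data in `(0, 1]`. The entries of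
`σ̃` are `≥ 1` and those of `σ*` are `≤ 1`. The AM-GM gap is scale invariant, so it is the same for
the tail data `dᵢ⁻²`, whose geometric mean is fixed by `|det F| = c` and `d₁`. Comparing the two
gaps therefore bounds `log T̃ - log T*` by `(Var σ̃ - Var σ*)/2` plus
`2 (log σ₁(F̃) - log σ₁(F*))/(m-1) ≤ 0`.
-/

open Real Finset

theorem hasDerivAt_sq_div_two_add_log {x : ℝ} (hx : x ≠ 0) :
    HasDerivAt (fun y => y ^ 2 / 2 + log y) (x + x⁻¹) x :=
  (((hasDerivAt_pow 2 x).div_const 2).fun_add (hasDerivAt_log hx)).congr_deriv (by norm_num)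

theorem hasDerivAt_add_inv {x : ℝ} (hx : x ≠ 0) :
    HasDerivAt (fun y => y + y⁻¹) (1 - (x ^ 2)⁻¹) x :=
  ((hasDerivAt_id' x).fun_add (hasDerivAt_inv hx)).congr_deriv (by ring)

theorem continuousOn_sq_div_two_add_log :
    ContinuousOn (fun x : ℝ => x ^ 2 / 2 + log x) (Set.Ioi 0) :=
  (continuous_pow 2 |>.div_const 2).continuousOn.add (continuousOn_log.mono fun _ hx => hx.ne')

theorem convexOn_sq_div_two_add_log :
    ConvexOn ℝ (Set.Ici 1) (fun x : ℝ => x ^ 2 / 2 + log x) := by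
  refine convexOn_of_hasDerivWithinAt2_nonneg (convex_Ici 1)
    (continuousOn_sq_div_two_add_log.mono fun x (hx : 1 ≤ x) => one_pos.trans_le hx)
    (f' := fun x => x + x⁻¹) (f'' := fun x => 1 - (x ^ 2)⁻¹) ?_ ?_ ?_ <;>
    simp only [interior_Ici, Set.mem_Ioi]
  · exact fun x hx => (hasDerivAt_sq_div_two_add_log (one_pos.trans hx).ne').hasDerivWithinAt
  · exact fun x hx => (hasDerivAt_add_inv (one_pos.trans hx).ne').hasDerivWithinAt
  · exact fun x hx => sub_nonneg.2 (inv_le_one_of_one_le₀ (one_le_pow₀ hx.le))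

theorem concaveOn_sq_div_two_add_log :
    ConcaveOn ℝ (Set.Ioc 0 1) (fun x : ℝ => x ^ 2 / 2 + log x) := by
  refine concaveOn_of_hasDerivWithinAt2_nonpos (convex_Ioc 0 1)
    (continuousOn_sq_div_two_add_log.mono Set.Ioc_subset_Ioi_self)
    (f' := fun x => x + x⁻¹) (f'' := fun x => 1 - (x ^ 2)⁻¹) ?_ ?_ ?_ <;>
    simp only [interior_Ioc, Set.mem_Ioo, and_imp]
  · exact fun x hx _ => (hasDerivAt_sq_div_two_add_log hx.ne').hasDerivWithinAt
  · exact fun x hx _ => (hasDerivAt_add_inv hx.ne').hasDerivWithinAt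
  · exact fun x hx hx1 =>
      sub_nonpos.2 ((one_le_inv₀ (by positivity)).2 (pow_le_one₀ hx.le hx1.le))

theorem empVar_eq_sum_sq_div_sub_sq {k : ℕ} (z : Fin k → ℝ) :
    empVar z = (∑ i, z i ^ 2) / k - ((∑ i, z i) / k) ^ 2 := by
  rcases Nat.eq_zero_or_pos k with rfl | hk
  · simp [empVar]
  have hk' : (k : ℝ) ≠ 0 := by positivity
  simp only [empVar, sub_sq, Finset.sum_add_distrib, Finset.sum_sub_distrib, ← Finset.sum_mul,
    ← Finset.mul_sum, Finset.sum_const, Finset.card_univ, Fintype.card_fin, nsmul_eq_mul]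
  field_simp
  ring

noncomputable def logAmGmGap {k : ℕ} (w : Fin k → ℝ) : ℝ :=
  log ((∑ i, w i) / k) - (∑ i, log (w i)) / k

theorem logAmGmGap_le_empVar_div_two {k : ℕ} (hk : 0 < k) (w : Fin k → ℝ) (hw : ∀ i, 1 ≤ w i) :
    logAmGmGap w ≤ empVar w / 2 := by
  have hJ := convexOn_sq_div_two_add_log.map_sum_le (t := univ) (w := fun _ => (k : ℝ)⁻¹)
    (p := w) (fun _ _ => by positivity) (by simp [hk.ne']) (fun i _ => hw i)
  simp only [smul_eq_mul, Finset.sum_add_distrib, inv_mul_eq_div, ← Finset.sum_div,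
    add_div] at hJ
  rw [logAmGmGap, empVar_eq_sum_sq_div_sub_sq]
  linarith [div_right_comm (∑ i, w i ^ 2) 2 (k : ℝ)]

theorem empVar_div_two_le_logAmGmGap {k : ℕ} (hk : 0 < k) (w : Fin k → ℝ) (hw₀ : ∀ i, 0 < w i)
    (hw₁ : ∀ i, w i ≤ 1) : empVar w / 2 ≤ logAmGmGap w := by
  have hJ := concaveOn_sq_div_two_add_log.le_map_sum (t := univ) (w := fun _ => (k : ℝ)⁻¹)
    (p := w) (fun _ _ => by positivity) (by simp [hk.ne']) (fun i _ => ⟨hw₀ i, hw₁ i⟩)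
  simp only [smul_eq_mul, Finset.sum_add_distrib, inv_mul_eq_div, ← Finset.sum_div,
    add_div] at hJ
  rw [logAmGmGap, empVar_eq_sum_sq_div_sub_sq]
  linarith [div_right_comm (∑ i, w i ^ 2) 2 (k : ℝ)]

theorem logAmGmGap_const_mul {k : ℕ} {a : ℝ} (ha : 0 < a) {w : Fin k → ℝ} (hw : ∀ i, 0 < w i) :
    logAmGmGap (fun i => a * w i) = logAmGmGap w := by
  rcases Nat.eq_zero_or_pos k with rfl | hk
  · simp [logAmGmGap]
  have hS : 0 < ∑ i, w i := Finset.sum_pos (fun i _ => hw i) (univ_nonempty_iff.2 ⟨⟨0, hk⟩⟩)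
  have hmean : (∑ i, a * w i) / k = a * ((∑ i, w i) / k) := by
    rw [← Finset.mul_sum, mul_div_assoc]
  rw [logAmGmGap, logAmGmGap, hmean, log_mul ha.ne' (div_pos hS (by positivity)).ne']
  simp only [log_mul ha.ne' (hw _).ne', Finset.sum_add_distrib, Finset.sum_const, card_univ,
    Fintype.card_fin, nsmul_eq_mul]
  field_simp
  ring

theorem logAmGmGap_inv_sq_tail {k : ℕ} {d : Fin (k + 1) → ℝ} (hd : ∀ i, 0 < d i) :
    logAmGmGap (fun i : Fin k => (d i.succ ^ 2)⁻¹) =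
      log ((∑ i : Fin k, (d i.succ ^ 2)⁻¹) / k) + 2 * (log (∏ i, d i) - log (d 0)) / k := by
  rw [logAmGmGap, log_prod fun i _ => (hd i).ne', Fin.sum_univ_succ]
  simp only [log_inv, log_pow, Finset.sum_neg_distrib, ← Finset.mul_sum]
  push_cast
  ring

theorem sum_inv_sq_tail_le_exp_mul {k : ℕ} (hk : 0 < k) {dt ds : Fin (k + 1) → ℝ}
    (hdt : ∀ i, 0 < dt i) (hds : ∀ i, 0 < ds i) (hprod : ∏ i, dt i = ∏ i, ds i)
    (h0 : dt 0 ≤ ds 0) :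
    ∑ i : Fin k, (dt i.succ ^ 2)⁻¹ ≤
      exp (logAmGmGap (fun i : Fin k => (dt i.succ ^ 2)⁻¹) -
        logAmGmGap (fun i : Fin k => (ds i.succ ^ 2)⁻¹)) * ∑ i : Fin k, (ds i.succ ^ 2)⁻¹ := by
  have hne : (univ : Finset (Fin k)).Nonempty := univ_nonempty_iff.2 ⟨⟨0, hk⟩⟩
  have hTt : 0 < ∑ i : Fin k, (dt i.succ ^ 2)⁻¹ :=
    sum_pos (fun i _ => inv_pos.2 (pow_pos (hdt i.succ) 2)) hne
  have hTs : 0 < ∑ i : Fin k, (ds i.succ ^ 2)⁻¹ :=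
    sum_pos (fun i _ => inv_pos.2 (pow_pos (hds i.succ) 2)) hne
  have hk' : (0 : ℝ) < k := by exact_mod_cast hk
  have hlog0 : 0 ≤ 2 * (log (ds 0) - log (dt 0)) / k :=
    div_nonneg (by linarith [log_le_log (hdt 0) h0]) hk'.le
  rw [← div_le_iff₀ hTs, ← exp_log (div_pos hTt hTs), exp_le_exp, logAmGmGap_inv_sq_tail hdt,
    logAmGmGap_inv_sq_tail hds, hprod, log_div hTt.ne' hTs.ne', log_div hTt.ne' hk'.ne',
    log_div hTs.ne' hk'.ne']
  have hgap : 2 * (log (∏ i, ds i) - log (dt 0)) / k - 2 * (log (∏ i, ds i) - log (ds 0)) / k =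
      2 * (log (ds 0) - log (dt 0)) / k := by ring
  linarith

theorem sum_inv_sq_le_mul_sum_tail {k : ℕ} (hk : 0 < k) {d : Fin (k + 1) → ℝ} (hanti : Antitone d)
    (hd : ∀ i, 0 < d i) :
    ∑ i, (d i ^ 2)⁻¹ ≤ ((k + 1) / k) * ∑ i : Fin k, (d i.succ ^ 2)⁻¹ := by
  set T := ∑ i : Fin k, (d i.succ ^ 2)⁻¹
  have hk' : (0 : ℝ) < k := by exact_mod_cast hk
  have hhead : k * (d 0 ^ 2)⁻¹ ≤ T := by
    simpa using Finset.card_nsmul_le_sum univ (fun i : Fin k => (d i.succ ^ 2)⁻¹) _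
      fun i _ => inv_anti₀ (pow_pos (hd i.succ) 2)
        (pow_le_pow_left₀ (hd i.succ).le (hanti (Fin.zero_le _)) 2)
  have hcoef : (k + 1) / k * T = T + T / k := by field_simp
  have hhead' : (d 0 ^ 2)⁻¹ ≤ T / k := by rw [le_div_iff₀ hk']; linarith
  rw [Fin.sum_univ_succ, hcoef]
  linarith

theorem sum_inv_sq_div_le {k : ℕ} {dt ds : Fin (k + 2) → ℝ} (hdt_anti : Antitone dt)
    (hds_anti : Antitone ds) (hdt : ∀ i, 0 < dt i) (hds : ∀ i, 0 < ds i)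
    (hprod : ∏ i, dt i = ∏ i, ds i) (h0 : dt 0 ≤ ds 0) :
    (∑ i, (dt i ^ 2)⁻¹) / (∑ i, (ds i ^ 2)⁻¹) ≤
      ((k + 2) / (k + 1)) * exp ((empVar (fun i : Fin (k + 1) => dt 1 ^ 2 / dt i.succ ^ 2) -
        empVar (fun i : Fin (k + 1) => ds (Fin.last _) ^ 2 / ds i.succ ^ 2)) / 2) := by
  have hk : 0 < k + 1 := k.succ_pos
  have hgap_t : logAmGmGap (fun i : Fin (k + 1) => (dt i.succ ^ 2)⁻¹) ≤
      empVar (fun i : Fin (k + 1) => dt 1 ^ 2 / dt i.succ ^ 2) / 2 := by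
    rw [← logAmGmGap_const_mul (pow_pos (hdt 1) 2) fun i => inv_pos.2 (pow_pos (hdt i.succ) 2)]
    simp_rw [← div_eq_mul_inv]
    refine logAmGmGap_le_empVar_div_two hk _ fun i => ?_
    rw [one_le_div (pow_pos (hdt _) 2)]
    exact pow_le_pow_left₀ (hdt _).le (hdt_anti (Fin.succ_le_succ_iff.2 (Fin.zero_le i))) 2
  have hgap_s : empVar (fun i : Fin (k + 1) => ds (Fin.last _) ^ 2 / ds i.succ ^ 2) / 2 ≤
      logAmGmGap (fun i : Fin (k + 1) => (ds i.succ ^ 2)⁻¹) := by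
    rw [← logAmGmGap_const_mul (pow_pos (hds (Fin.last _)) 2)
      fun i => inv_pos.2 (pow_pos (hds i.succ) 2)]
    simp_rw [← div_eq_mul_inv]
    refine empVar_div_two_le_logAmGmGap hk _ (fun i => div_pos (pow_pos (hds _) 2)
      (pow_pos (hds _) 2)) fun i => ?_
    rw [div_le_one (pow_pos (hds _) 2)]
    exact pow_le_pow_left₀ (hds _).le (hds_anti (Fin.le_last _)) 2
  have hhead := sum_inv_sq_le_mul_sum_tail hk hdt_anti hdt
  have hcoef : (((k + 1 : ℕ) : ℝ) + 1) / ((k + 1 : ℕ) : ℝ) = (k + 2) / (k + 1) := by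
    push_cast; ring
  rw [hcoef] at hhead
  have hs : ∑ i : Fin (k + 1), (ds i.succ ^ 2)⁻¹ ≤ ∑ i, (ds i ^ 2)⁻¹ := by
    rw [Fin.sum_univ_succ (n := k + 1)]
    exact le_add_of_nonneg_left (inv_nonneg.2 (sq_nonneg (ds 0)))
  rw [div_le_iff₀ (sum_pos (fun i _ => inv_pos.2 (pow_pos (hds i) 2)) univ_nonempty)]
  calc ∑ i, (dt i ^ 2)⁻¹
      ≤ (k + 2) / (k + 1) * ∑ i : Fin (k + 1), (dt i.succ ^ 2)⁻¹ := hhead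
    _ ≤ (k + 2) / (k + 1) * (exp (logAmGmGap (fun i : Fin (k + 1) => (dt i.succ ^ 2)⁻¹) -
          logAmGmGap (fun i : Fin (k + 1) => (ds i.succ ^ 2)⁻¹)) *
            ∑ i : Fin (k + 1), (ds i.succ ^ 2)⁻¹) := by
      gcongr
      exact sum_inv_sq_tail_le_exp_mul hk hdt hds hprod h0
    _ ≤ (k + 2) / (k + 1) * (exp ((empVar (fun i : Fin (k + 1) => dt 1 ^ 2 / dt i.succ ^ 2) -
          empVar (fun i : Fin (k + 1) => ds (Fin.last _) ^ 2 / ds i.succ ^ 2)) / 2) *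
            ∑ i, (ds i ^ 2)⁻¹) := by
      gcongr
      linarith
    _ = _ := by ring

theorem Matrix.IsHermitian.trace_cfc {n 𝕜 : Type*} [Fintype n] [DecidableEq n] [RCLike 𝕜]
    {A : Matrix n n 𝕜} (hA : A.IsHermitian) (f : ℝ → ℝ) :
    (cfc f A).trace = ∑ i, (f (hA.eigenvalues i) : 𝕜) := by
  rw [hA.cfc_eq, IsHermitian.cfc, Unitary.conjStarAlgAut_apply, trace_mul_cycle,
    Unitary.coe_star_mul_self, one_mul, trace_diagonal]
  rfl

section SingularValues

open Matrix

variable {m : ℕ} (M : Matrix (Fin m) (Fin m) ℝ)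

theorem posSemidef_transpose_mul_self : (Mᵀ * M).PosSemidef := by
  simpa using posSemidef_conjTranspose_mul_self M

theorem sq_svals (i : Fin m) :
    svals M i ^ 2 = (posSemidef_transpose_mul_self M).isHermitian.eigenvalues i :=
  sq_sqrt ((posSemidef_transpose_mul_self M).eigenvalues_nonneg i)

theorem prod_svals : ∏ i, svals M i = |M.det| := by
  have hdet : M.det ^ 2 = (Mᵀ * M).det := by rw [det_mul, det_transpose, sq]
  rw [← sqrt_sq_eq_abs, hdet,
    (posSemidef_transpose_mul_self M).isHermitian.det_eq_prod_eigenvalues]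
  simp only [RCLike.ofReal_real_eq_id, id_eq]
  rw [sqrt_prod _ fun i _ => (posSemidef_transpose_mul_self M).eigenvalues_nonneg i]
  rfl

theorem svals_pos (hM : IsUnit M.det) (i : Fin m) : 0 < svals M i := by
  have hprod : ∏ i, svals M i ≠ 0 := by rw [prod_svals]; exact abs_ne_zero.2 hM.ne_zero
  exact (sqrt_nonneg _).lt_of_ne' (prod_ne_zero_iff.1 hprod i (mem_univ i))

theorem sum_sq_svals : ∑ i, svals M i ^ 2 = (Mᵀ * M).trace := by
  simp_rw [sq_svals, (posSemidef_transpose_mul_self M).isHermitian.trace_eq_sum_eigenvalues]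
  rfl

theorem sum_inv_sq_svals (hM : IsUnit M.det) : ∑ i, (svals M i ^ 2)⁻¹ = ((Mᵀ * M)⁻¹).trace := by
  have hA := (posSemidef_transpose_mul_self M).isHermitian
  have hunit : IsUnit (Mᵀ * M) := (isUnit_iff_isUnit_det _).2 (by simpa [det_mul] using hM)
  rw [nonsing_inv_eq_ringInverse, ← cfc_ringInverse_id (R := ℝ) _ hunit hA.isSelfAdjoint,
    hA.trace_cfc]
  simp_rw [sq_svals]
  rfl

theorem sum_sq_svals_inv (hM : IsUnit M.det) :
    ∑ i, svals M⁻¹ i ^ 2 = ∑ i, (svals M i ^ 2)⁻¹ := by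
  rw [sum_sq_svals, sum_inv_sq_svals M hM, trace_mul_comm, Matrix.mul_inv_rev,
    transpose_nonsing_inv]

theorem svDesc_eq_comp :
    svDesc M = svals M ∘ (Fin.revPerm.trans (Tuple.sort (svals M))) := rfl

theorem svDesc_antitone : Antitone (svDesc M) :=
  fun _ _ hij => Tuple.monotone_sort (svals M) (Fin.rev_le_rev.2 hij)

theorem sum_comp_svDesc (f : ℝ → ℝ) : ∑ i, f (svDesc M i) = ∑ i, f (svals M i) := by
  rw [svDesc_eq_comp]
  exact Equiv.sum_comp _ (f ∘ svals M)

theorem prod_svDesc : ∏ i, svDesc M i = |M.det| := by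
  rw [← prod_svals, svDesc_eq_comp]
  exact Equiv.prod_comp _ (svals M)

theorem svDesc_pos (hM : IsUnit M.det) (i : Fin m) : 0 < svDesc M i :=
  svals_pos M hM _

theorem sum_sq_svDesc_inv (hM : IsUnit M.det) :
    ∑ i, svDesc M⁻¹ i ^ 2 = ∑ i, (svDesc M i ^ 2)⁻¹ := by
  rw [sum_comp_svDesc M⁻¹ (· ^ 2), sum_comp_svDesc M (fun x => (x ^ 2)⁻¹), sum_sq_svals_inv M hM]

end SingularValues

/-- Suboptimality bound for the H₂ surrogate.  For invertible m×m matrices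
F*, F̃ with |det F*| = |det F̃| = c > 0 and σ_max(F̃) ≤ σ_max(F*), writing
H₂(F) = Σᵢ σᵢ(F⁻¹)², σ̃ᵢ = σ₂(F̃)²/σⱼ(F̃)² and σ*ᵢ = σ_m(F*)²/σⱼ(F*)² (j = 2,…,m),
we have H₂(F̃)/H₂(F*) ≤ (m/(m−1))·exp((Var σ̃ − Var σ*)/2). -/
theorem stmt11 {m : ℕ} (hm : 1 < m)
    (Fstar Ftil : Matrix (Fin m) (Fin m) ℝ)
    (hFs : IsUnit Fstar.det) (hFt : IsUnit Ftil.det)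
    (c : ℝ) (hdets : |Fstar.det| = c) (hdett : |Ftil.det| = c)
    (hopt : svDesc Ftil ⟨0, by omega⟩ ≤ svDesc Fstar ⟨0, by omega⟩) :
    (∑ i, svDesc Ftil⁻¹ i ^ 2) / (∑ i, svDesc Fstar⁻¹ i ^ 2) ≤
      ((m : ℝ) / ((m : ℝ) - 1)) *
        Real.exp
          ((empVar (fun i : Fin (m - 1) =>
              svDesc Ftil ⟨1, by omega⟩ ^ 2 /
                svDesc Ftil ⟨(i : ℕ) + 1, by have := i.isLt; omega⟩ ^ 2) -
            empVar (fun i : Fin (m - 1) =>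
              svDesc Fstar ⟨m - 1, by omega⟩ ^ 2 /
                svDesc Fstar ⟨(i : ℕ) + 1, by have := i.isLt; omega⟩ ^ 2)) / 2) := by
  obtain ⟨k, rfl⟩ : ∃ k, m = k + 2 := ⟨m - 2, by omega⟩
  have hcoef : ((k + 2 : ℕ) : ℝ) / ((k + 2 : ℕ) - 1) = (k + 2) / (k + 1) := by push_cast; ring
  rw [sum_sq_svDesc_inv Ftil hFt, sum_sq_svDesc_inv Fstar hFs, hcoef]
  simp only [Fin.zero_eta, Fin.mk_one] at hopt ⊢
  exact sum_inv_sq_div_le (svDesc_antitone Ftil) (svDesc_antitone Fstar) (svDesc_pos Ftil hFt)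
    (svDesc_pos Fstar hFs) (by rw [prod_svDesc, prod_svDesc, hdett, hdets]) hopt
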